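/- Let X and Y be identically distributed real random variables with common CDF F and finite positive variance, and let H be the joint CDF of (X,Y). Then (X,Y) ∈ IC_r if and only if (X,Y) is quasi-r-Fréchet, i.e. (H(x,y) + H(y,x))/2 = r·min(F(x),F(y)) + (1−r)·F(x)F(y) for all x, y ∈ ℝ. -/

import Mathlib

open MeasureTheory ProbabilityTheory

variable {Ω : Type*} [MeasurableSpace Ω]

noncomputable def cov (μ : Measure Ω) (X Y : Ω → ℝ) : ℝ :=
  ∫ ω, (X ω - ∫ a, X a ∂μ) * (Y ω - ∫ a, Y a ∂μ) ∂μ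

noncomputable def corr (μ : Measure Ω) (X Y : Ω → ℝ) : ℝ :=
  cov μ X Y / Real.sqrt (variance X μ * variance Y μ)

def Admissible (μ : Measure Ω) (X Y : Ω → ℝ) (g : ℝ → ℝ) : Prop :=
  Measurable g ∧ MemLp (g ∘ X) 2 μ ∧ MemLp (g ∘ Y) 2 μ ∧
    0 < variance (g ∘ X) μ ∧ 0 < variance (g ∘ Y) μ

def IC (μ : Measure Ω) (X Y : Ω → ℝ) (r : ℝ) : Prop :=
  corr μ X Y = r ∧ ∀ g : ℝ → ℝ, Admissible μ X Y g → corr μ (g ∘ X) (g ∘ Y) = r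

/-!
Write `F` for the common CDF and `H` for the joint CDF. For `g = 1_{(-∞, x]}` and
`h = 1_{(-∞, y]}` one has `cov(g X, h Y) = H(x, y) - F(x) F(y)` and
`cov(g X, h X) = min (F x) (F y) - F(x) F(y)`, so the quasi-`r`-Fréchet identity says that the
symmetric bilinear form `(g, h) ↦ (cov(g X, h Y) + cov(h X, g Y)) / 2 - r cov(g X, h X)` vanishes
on pairs of such indicators.

If `(X, Y) ∈ IC_r`, its diagonal `cov(g X, g Y) - r Var(g X)` vanishes for every square-integrable
`g`: for admissible `g` by definition, and otherwise because `g X` is a.s. constant. Polarising at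
`g`, `h` and `g + h` gives the identity.

Conversely, the identity compares the symmetrised law of `(X, Y)` with
`r · law(X, X) + (1 - r) · law(X) ⊗ law(X)` on the quadrants `(-∞, a] × (-∞, b]`, which determine
finite measures on `ℝ²`. Integrating `g(s) g(t)` against the resulting equality of measures
gives `cov(g X, g Y) = r Var(g X)` for all square-integrable `g`, hence `IC_r`.
-/

open Set

lemma MeasureTheory.Measure.ext_of_Iic_prod {m m' : Measure (ℝ × ℝ)} [IsFiniteMeasure m]
    (h : ∀ a b : ℝ, m (Iic a ×ˢ Iic b) = m' (Iic a ×ˢ Iic b)) : m = m' := by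
  have hmono : Monotone fun n : ℕ ↦ Iic (n : ℝ) ×ˢ Iic (n : ℝ) := fun _ _ hkn ↦
    Set.prod_mono (Iic_subset_Iic.2 (Nat.mono_cast hkn)) (Iic_subset_Iic.2 (Nat.mono_cast hkn))
  have hunion : ⋃ n : ℕ, Iic (n : ℝ) ×ˢ Iic (n : ℝ) = univ := by
    refine eq_univ_of_forall fun z ↦ mem_iUnion.2 ?_
    obtain ⟨n, hn⟩ := exists_nat_ge (max z.1 z.2)
    exact ⟨n, (max_le_iff.1 hn).1, (max_le_iff.1 hn).2⟩
  have huniv : m univ = m' univ := by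
    rw [← hunion, hmono.measure_iUnion, hmono.measure_iUnion]
    simp only [h]
  have hspan : IsCountablySpanning (range (Iic : ℝ → Set ℝ)) :=
    ⟨fun n : ℕ ↦ Iic (n : ℝ), fun n ↦ mem_range_self _,
      iUnion_Iic_of_not_bddAbove_range (not_bddAbove_iff.2 fun x ↦
        let ⟨n, hn⟩ := exists_nat_gt x; ⟨n, mem_range_self n, hn⟩)⟩
  have hIic : MeasurableSpace.generateFrom (range (Iic : ℝ → Set ℝ)) = Real.measurableSpace :=
    (borel_eq_generateFrom_Iic ℝ).symm.trans (BorelSpace.measurable_eq (α := ℝ)).symm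
  refine ext_of_generate_finite _ (generateFrom_eq_prod hIic hIic hspan hspan).symm
    (isPiSystem_Iic.prod isPiSystem_Iic) ?_ huniv
  rintro _ ⟨_, ⟨a, rfl⟩, _, ⟨b, rfl⟩, rfl⟩
  exact h a b

lemma Set.indicator_one_comp {α β M : Type*} [One M] [Zero M] (s : Set β) (f : α → β) :
    s.indicator (1 : β → M) ∘ f = (f ⁻¹' s).indicator 1 :=
  funext fun _ ↦ (indicator_comp_right f).symm

namespace ProbabilityTheory

variable {μ : Measure Ω} {U V : Ω → ℝ}

lemma corr_eq_iff {r : ℝ} (hU : 0 < Var[U; μ]) (hVU : Var[V; μ] = Var[U; μ]) :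
    corr μ U V = r ↔ cov[U, V; μ] = r * Var[U; μ] := by
  rw [corr, hVU, Real.sqrt_mul_self hU.le, div_eq_iff hU.ne']
  rfl

lemma covariance_eq_zero_of_variance_eq_zero [IsFiniteMeasure μ] (hU : MemLp U 2 μ)
    (h : Var[U; μ] = 0) : cov[U, V; μ] = 0 := by
  have hconst : U =ᵐ[μ] fun _ ↦ μ[U] := by
    rw [← evariance_eq_zero_iff hU.aemeasurable, ← hU.ofReal_variance_eq, h, ENNReal.ofReal_zero]
  refine integral_eq_zero_of_ae ?_
  filter_upwards [hconst] with ω hω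
  rw [hω, sub_self, zero_mul]
  rfl

lemma covariance_add_covariance_swap_eq [IsFiniteMeasure μ] {U₁ U₂ V₁ V₂ : Ω → ℝ} {r : ℝ}
    (hU₁ : MemLp U₁ 2 μ) (hU₂ : MemLp U₂ 2 μ) (hV₁ : MemLp V₁ 2 μ) (hV₂ : MemLp V₂ 2 μ)
    (h₁ : cov[U₁, V₁; μ] = r * Var[U₁; μ]) (h₂ : cov[U₂, V₂; μ] = r * Var[U₂; μ])
    (h₁₂ : cov[U₁ + U₂, V₁ + V₂; μ] = r * Var[U₁ + U₂; μ]) :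
    cov[U₁, V₂; μ] + cov[U₂, V₁; μ] = 2 * r * cov[U₁, U₂; μ] := by
  rw [covariance_add_left hU₁ hU₂ (hV₁.add hV₂), covariance_add_right hU₁ hV₁ hV₂,
    covariance_add_right hU₂ hV₁ hV₂, variance_add hU₁ hU₂] at h₁₂
  linear_combination h₁₂ - h₁ - h₂

lemma covariance_indicator_one [IsProbabilityMeasure μ] {A B : Set Ω} (hA : MeasurableSet A)
    (hB : MeasurableSet B) :
    cov[A.indicator 1, B.indicator 1; μ] = μ.real (A ∩ B) - μ.real A * μ.real B := by
  have hLp {C : Set Ω} (hC : MeasurableSet C) : MemLp (C.indicator (1 : Ω → ℝ)) 2 μ :=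
    (memLp_const (1 : ℝ)).indicator hC
  rw [covariance_eq_sub (hLp hA) (hLp hB),
    ← inter_indicator_one, integral_indicator_one (hA.inter hB), integral_indicator_one hA,
    integral_indicator_one hB]

end ProbabilityTheory

section InvariantCorrelation

variable {μ : Measure Ω} {X Y : Ω → ℝ} {r : ℝ}

def QuasiFrechet (μ : Measure Ω) (X Y : Ω → ℝ) (r : ℝ) : Prop :=
  ∀ x y : ℝ, (μ.real {ω | X ω ≤ x ∧ Y ω ≤ y} + μ.real {ω | X ω ≤ y ∧ Y ω ≤ x}) / 2 =
    r * min (μ.real {ω | X ω ≤ x}) (μ.real {ω | X ω ≤ y}) +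
      (1 - r) * (μ.real {ω | X ω ≤ x} * μ.real {ω | X ω ≤ y})

def InvariantCovariance (μ : Measure Ω) (X Y : Ω → ℝ) (r : ℝ) : Prop :=
  ∀ g : ℝ → ℝ, Measurable g → MemLp (g ∘ X) 2 μ → cov[g ∘ X, g ∘ Y; μ] = r * Var[g ∘ X; μ]

lemma identDistrib_of_measure_le_eq [IsFiniteMeasure μ] (hX : Measurable X) (hY : Measurable Y)
    (h : ∀ x, μ {ω | X ω ≤ x} = μ {ω | Y ω ≤ x}) : IdentDistrib X Y μ μ where
  aemeasurable_fst := hX.aemeasurable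
  aemeasurable_snd := hY.aemeasurable
  map_eq := Measure.ext_of_Iic _ _ fun x ↦ by
    rw [Measure.map_apply hX measurableSet_Iic, Measure.map_apply hY measurableSet_Iic]
    exact h x

lemma measureReal_preimage_Iic_inter (μ : Measure Ω) [IsFiniteMeasure μ] (X : Ω → ℝ) (a b : ℝ) :
    μ.real (X ⁻¹' Iic a ∩ X ⁻¹' Iic b) = min (μ.real (X ⁻¹' Iic a)) (μ.real (X ⁻¹' Iic b)) := by
  rw [← preimage_inter, Iic_inter_Iic]
  exact Monotone.map_min fun a b hab ↦ measureReal_mono (preimage_mono (Iic_subset_Iic.2 hab))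

lemma ic_iff_invariantCovariance [IsFiniteMeasure μ] (hX : MemLp X 2 μ) (hvX : 0 < Var[X; μ])
    (hd : IdentDistrib X Y μ μ) : IC μ X Y r ↔ InvariantCovariance μ X Y r := by
  constructor
  · rintro ⟨-, hIC⟩ g hg hgX
    have hdg := hd.comp hg
    rcases (variance_nonneg (g ∘ X) μ).eq_or_lt with hzero | hpos
    · rw [← hzero, mul_zero, covariance_eq_zero_of_variance_eq_zero hgX hzero.symm]
    · exact (corr_eq_iff hpos hdg.variance_eq.symm).1 <|
        hIC g ⟨hg, hgX, hdg.memLp_snd hgX, hpos, hdg.variance_eq ▸ hpos⟩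
  · intro h
    refine ⟨(corr_eq_iff hvX hd.variance_eq.symm).2 (h id measurable_id hX), ?_⟩
    rintro g ⟨hg, hgX, -, hpos, -⟩
    exact (corr_eq_iff hpos (hd.comp hg).variance_eq.symm).2 (h g hg hgX)

lemma InvariantCovariance.quasiFrechet [IsProbabilityMeasure μ] (hX : Measurable X)
    (hY : Measurable Y) (hd : IdentDistrib X Y μ μ) (h : InvariantCovariance μ X Y r) :
    QuasiFrechet μ X Y r := by
  intro x y
  have hind (t : ℝ) : Measurable ((Iic t).indicator (1 : ℝ → ℝ)) :=
    measurable_one.indicator measurableSet_Iic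
  have hLp {U : Ω → ℝ} (hU : Measurable U) (t : ℝ) :
      MemLp ((Iic t).indicator (1 : ℝ → ℝ) ∘ U) 2 μ := by
    rw [indicator_one_comp]
    exact (memLp_const (1 : ℝ)).indicator (hU measurableSet_Iic)
  have hpolar := covariance_add_covariance_swap_eq (hLp hX x) (hLp hX y) (hLp hY x) (hLp hY y)
    (h _ (hind x) (hLp hX x)) (h _ (hind y) (hLp hX y))
    (h _ ((hind x).add (hind y)) ((hLp hX x).add (hLp hX y)))
  simp only [indicator_one_comp] at hpolar
  rw [covariance_indicator_one (hX measurableSet_Iic) (hY measurableSet_Iic),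
    covariance_indicator_one (hX measurableSet_Iic) (hY measurableSet_Iic),
    covariance_indicator_one (hX measurableSet_Iic) (hX measurableSet_Iic)] at hpolar
  have hFY (t : ℝ) : μ.real (Y ⁻¹' Iic t) = μ.real (X ⁻¹' Iic t) := by
    simp only [measureReal_def, hd.measure_mem_eq measurableSet_Iic]
  rw [hFY, hFY, measureReal_preimage_Iic_inter] at hpolar
  change (μ.real (X ⁻¹' Iic x ∩ Y ⁻¹' Iic y) + μ.real (X ⁻¹' Iic y ∩ Y ⁻¹' Iic x)) / 2 =
    r * min (μ.real (X ⁻¹' Iic x)) (μ.real (X ⁻¹' Iic y)) +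
      (1 - r) * (μ.real (X ⁻¹' Iic x) * μ.real (X ⁻¹' Iic y))
  linear_combination hpolar / 2

-- `r` may be negative, so its negative part is moved to the left-hand side.
lemma QuasiFrechet.map_add_map_swap_eq [IsProbabilityMeasure μ] (hr : r ≤ 1) (hX : Measurable X)
    (hY : Measurable Y) (h : QuasiFrechet μ X Y r) :
    μ.map (fun ω ↦ (X ω, Y ω)) + μ.map (fun ω ↦ (Y ω, X ω)) +
        (-(2 * r)).toNNReal • μ.map (fun ω ↦ (X ω, X ω)) =
      (2 * r).toNNReal • μ.map (fun ω ↦ (X ω, X ω)) +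
        (2 - 2 * r).toNNReal • (μ.map X).prod (μ.map X) := by
  refine Measure.ext_of_Iic_prod fun a b ↦ ?_
  have hpair {U V : Ω → ℝ} (hU : Measurable U) (hV : Measurable V) :
      μ.map (fun ω ↦ (U ω, V ω)) (Iic a ×ˢ Iic b) = μ (U ⁻¹' Iic a ∩ V ⁻¹' Iic b) :=
    Measure.map_apply (hU.prodMk hV) (measurableSet_Iic.prod measurableSet_Iic)
  have hq : (μ.real (X ⁻¹' Iic a ∩ Y ⁻¹' Iic b) + μ.real (Y ⁻¹' Iic a ∩ X ⁻¹' Iic b)) / 2 =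
      r * min (μ.real (X ⁻¹' Iic a)) (μ.real (X ⁻¹' Iic b)) +
        (1 - r) * (μ.real (X ⁻¹' Iic a) * μ.real (X ⁻¹' Iic b)) := by
    rw [inter_comm (Y ⁻¹' Iic a)]
    exact h a b
  simp only [Measure.add_apply, Measure.smul_apply, hpair hX hY, hpair hY hX, hpair hX hX,
    Measure.prod_prod, Measure.map_apply hX measurableSet_Iic, ENNReal.smul_def, smul_eq_mul]
  rw [← ENNReal.toReal_eq_toReal_iff' (by finiteness) (by finiteness),
    ENNReal.toReal_add (by finiteness) (by finiteness),
    ENNReal.toReal_add (by finiteness) (by finiteness),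
    ENNReal.toReal_add (by finiteness) (by finiteness)]
  simp only [ENNReal.toReal_mul, ENNReal.coe_toReal, Real.coe_toNNReal', ← measureReal_def,
    measureReal_preimage_Iic_inter, max_eq_left (by linarith : 0 ≤ 2 - 2 * r)]
  linear_combination 2 * hq -
    min (μ.real (X ⁻¹' Iic a)) (μ.real (X ⁻¹' Iic b)) * max_zero_sub_max_neg_zero_eq_self (2 * r)

lemma QuasiFrechet.integral_comp_mul_comp [IsProbabilityMeasure μ] (hr : r ≤ 1)
    (hX : Measurable X) (hY : Measurable Y) (h : QuasiFrechet μ X Y r) {g : ℝ → ℝ}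
    (hg : Measurable g) (hgX : MemLp (g ∘ X) 2 μ) (hgY : MemLp (g ∘ Y) 2 μ) :
    μ[(g ∘ X) * (g ∘ Y)] = r * μ[(g ∘ X) ^ 2] + (1 - r) * μ[g ∘ X] ^ 2 := by
  let φ : ℝ × ℝ → ℝ := fun z ↦ g z.1 * g z.2
  have hφ : Measurable φ := by fun_prop
  have hpair {U V : Ω → ℝ} (hU : Measurable U) (hV : Measurable V) (hgU : MemLp (g ∘ U) 2 μ)
      (hgV : MemLp (g ∘ V) 2 μ) :
      Integrable φ (μ.map fun ω ↦ (U ω, V ω)) ∧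
        ∫ z, φ z ∂(μ.map fun ω ↦ (U ω, V ω)) = μ[(g ∘ U) * (g ∘ V)] :=
    ⟨(integrable_map_measure hφ.aestronglyMeasurable (hU.prodMk hV).aemeasurable).2
      (hgU.integrable_mul hgV), integral_map (hU.prodMk hV).aemeasurable hφ.aestronglyMeasurable⟩
  obtain ⟨hXYi, hXY⟩ := hpair hX hY hgX hgY
  obtain ⟨hYXi, hYX⟩ := hpair hY hX hgY hgX
  obtain ⟨hXXi, hXX⟩ := hpair hX hX hgX hgX
  have hgρ : Integrable g (μ.map X) :=
    (integrable_map_measure hg.aestronglyMeasurable hX.aemeasurable).2 (hgX.integrable one_le_two)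
  have hprod : ∫ z, φ z ∂(μ.map X).prod (μ.map X) = μ[g ∘ X] ^ 2 := by
    rw [integral_prod_mul, integral_map hX.aemeasurable hg.aestronglyMeasurable, sq]
    rfl
  have hlaw := congrArg (fun m ↦ ∫ z, φ z ∂m) (h.map_add_map_swap_eq hr hX hY)
  rw [integral_add_measure (hXYi.add_measure hYXi) hXXi.smul_measure_nnreal,
    integral_add_measure hXYi hYXi,
    integral_add_measure hXXi.smul_measure_nnreal (hgρ.mul_prod hgρ).smul_measure_nnreal,
    integral_smul_nnreal_measure, integral_smul_nnreal_measure, integral_smul_nnreal_measure,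
    hXY, hYX, hXX, hprod, mul_comm (g ∘ Y), ← sq] at hlaw
  simp only [NNReal.smul_def, Real.coe_toNNReal', smul_eq_mul,
    max_eq_left (by linarith : 0 ≤ 2 - 2 * r)] at hlaw
  linear_combination hlaw / 2 + μ[(g ∘ X) ^ 2] / 2 * max_zero_sub_max_neg_zero_eq_self (2 * r)

lemma QuasiFrechet.invariantCovariance [IsProbabilityMeasure μ] (hr : r ≤ 1) (hX : Measurable X)
    (hY : Measurable Y) (hd : IdentDistrib X Y μ μ) (h : QuasiFrechet μ X Y r) :
    InvariantCovariance μ X Y r := by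
  intro g hg hgX
  have hdg := hd.comp hg
  have hgY := hdg.memLp_snd hgX
  rw [covariance_eq_sub hgX hgY, variance_eq_sub hgX, ← hdg.integral_eq,
    h.integral_comp_mul_comp hr hX hY hg hgX hgY]
  ring

end InvariantCorrelation

theorem ic_iff_quasi_frechet_general
    (μ : Measure Ω) [IsProbabilityMeasure μ] (X Y : Ω → ℝ)
    (hXm : Measurable X) (hYm : Measurable Y)
    (hX2 : MemLp X 2 μ)
    (hvX : 0 < variance X μ)
    (hident : ∀ x : ℝ, μ {ω | X ω ≤ x} = μ {ω | Y ω ≤ x})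
    (r : ℝ) (hr : r ∈ Set.Icc (-1 : ℝ) 1) :
    IC μ X Y r ↔
      ∀ x y : ℝ,
        ((μ {ω | X ω ≤ x ∧ Y ω ≤ y}).toReal + (μ {ω | X ω ≤ y ∧ Y ω ≤ x}).toReal) / 2 =
          r * min ((μ {ω | X ω ≤ x}).toReal) ((μ {ω | X ω ≤ y}).toReal) +
            (1 - r) * ((μ {ω | X ω ≤ x}).toReal * (μ {ω | X ω ≤ y}).toReal) := by
  have hd := identDistrib_of_measure_le_eq hXm hYm hident
  rw [ic_iff_invariantCovariance hX2 hvX hd]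
  show InvariantCovariance μ X Y r ↔ QuasiFrechet μ X Y r
  exact ⟨fun h ↦ h.quasiFrechet hXm hYm hd, fun h ↦ h.invariantCovariance hr.2 hXm hYm hd⟩

/-- For identically distributed `X, Y` with common CDF `F`, `(X,Y) ∈ IC_r`
iff `(X,Y)` is quasi-`r`-Fréchet, i.e.
`(H(x,y) + H(y,x))/2 = r·min(F(x),F(y)) + (1-r)·F(x)F(y)` for all `x, y`. -/
theorem ic_iff_quasi_frechet
    (μ : Measure Ω) [IsProbabilityMeasure μ] (X Y : Ω → ℝ)
    (hXm : Measurable X) (hYm : Measurable Y)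
    (hX2 : MemLp X 2 μ) (hY2 : MemLp Y 2 μ)
    (hvX : 0 < variance X μ) (hvY : 0 < variance Y μ)
    (hident : ∀ x : ℝ, μ {ω | X ω ≤ x} = μ {ω | Y ω ≤ x})
    (r : ℝ) (hr : r ∈ Set.Icc (-1 : ℝ) 1) :
    IC μ X Y r ↔
      ∀ x y : ℝ,
        ((μ {ω | X ω ≤ x ∧ Y ω ≤ y}).toReal + (μ {ω | X ω ≤ y ∧ Y ω ≤ x}).toReal) / 2 =
          r * min ((μ {ω | X ω ≤ x}).toReal) ((μ {ω | X ω ≤ y}).toReal) +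
            (1 - r) * ((μ {ω | X ω ≤ x}).toReal * (μ {ω | X ω ≤ y}).toReal) :=
  ic_iff_quasi_frechet_general μ X Y hXm hYm hX2 hvX hident r hr
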